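/- arXiv:2511.10363 — 2 statements merged into one kernel-verified Lean document; each statement's English description precedes it below -/
import Mathlib

section
/- Let a_1, a_2, a_3 be filtering elements over ℝⁿ whose C-components and J-components are all symmetric positive semidefinite. Then both (a_1 ⊗ a_2) ⊗ a_3 and a_1 ⊗ (a_2 ⊗ a_3) are well defined (all matrix inverses involved exist) and they are equal, i.e., the filtering operator ⊗ is associative on such elements. -/
open Matrix

/-- A filtering element over `ℝⁿ`. -/
structure FilteringElem (n : ℕ) where
  A : Matrix (Fin n) (Fin n) ℝ
  b : Fin n → ℝ
  C : Matrix (Fin n) (Fin n) ℝ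
  η : Fin n → ℝ
  J : Matrix (Fin n) (Fin n) ℝ

/-- The filtering operator `⊗` on filtering elements. -/
noncomputable def filterOp {n : ℕ} (x y : FilteringElem n) : FilteringElem n where
  A := y.A * (1 + x.C * y.J)⁻¹ * x.A
  b := (y.A * (1 + x.C * y.J)⁻¹) *ᵥ (x.b + x.C *ᵥ y.η) + y.b
  C := y.A * (1 + x.C * y.J)⁻¹ * x.C * y.Aᵀ + y.C
  η := (x.Aᵀ * (1 + y.J * x.C)⁻¹) *ᵥ (y.η - y.J *ᵥ x.b) + x.η
  J := x.Aᵀ * (1 + y.J * x.C)⁻¹ * y.J * x.A + x.J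

/-!
Read an element `(A, b, C, η, J)` as an affine relation between a forward state and a backward
costate at two ends, `(x, μ)` and `(x', μ')`: `x' = A x + b + C μ'` and `μ = Aᵀ μ' + η - J x`.
This relation determines the element. When `Cᵢ`, `Jⱼ` are symmetric and `1 + Cᵢ Jⱼ` is invertible,
the relation of `aᵢ ⊗ aⱼ` is the composite of the relations of `aᵢ` and `aⱼ`: the intermediate
state and costate are the unique solution of a linear system with matrix `1 + Cᵢ Jⱼ`.
Composition of relations is associative, hence so is `⊗`.

Positive semidefiniteness supplies the invertibility: `v = -C J v` forces
`⟪v, J v⟫ = -⟪J v, C (J v)⟫`, so both vanish and `v = 0`. It is also preserved by `⊗`, because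
`(1 + C J)⁻¹ C = (1 + C J)⁻¹ (C + C J C) (1 + C J)⁻ᴴ`.
-/

namespace Matrix

variable {m R : Type*} [Fintype m] [CommRing R]

theorem mulVec_add_add_mulVec_inj {M M' N N' : Matrix m m R} {v v' : m → R}
    (h : ∀ x y, M *ᵥ x + v + N *ᵥ y = M' *ᵥ x + v' + N' *ᵥ y) :
    M = M' ∧ v = v' ∧ N = N' := by
  have hv : v = v' := by simpa using h 0 0
  subst hv
  exact ⟨ext_iff_mulVec.2 fun x ↦ by simpa using h x 0, rfl,
    ext_iff_mulVec.2 fun y ↦ by simpa using h 0 y⟩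

variable [DecidableEq m]

theorem eq_inv_mulVec_iff {P : Matrix m m R} (hP : IsUnit P) {u y : m → R} :
    y = P⁻¹ *ᵥ u ↔ P *ᵥ y = u := by
  rw [isUnit_iff_isUnit_det] at hP
  constructor
  · rintro rfl
    rw [mulVec_mulVec, mul_nonsing_inv _ hP, one_mulVec]
  · rintro rfl
    rw [mulVec_mulVec, nonsing_inv_mul _ hP, one_mulVec]

variable {C J : Matrix m m R}

theorem isUnit_one_add_mul_comm (h : IsUnit (1 + C * J)) : IsUnit (1 + J * C) := by
  rwa [isUnit_iff_isUnit_det, ← det_one_add_mul_comm, ← isUnit_iff_isUnit_det]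

theorem transpose_inv_one_add_mul (hC : C.IsSymm) (hJ : J.IsSymm) :
    (1 + C * J)⁻¹ᵀ = (1 + J * C)⁻¹ := by
  rw [transpose_nonsing_inv, transpose_add, transpose_one, transpose_mul, hC.eq, hJ.eq]

theorem eq_add_mulVec_and_eq_sub_mulVec_iff (hP : IsUnit (1 + C * J)) {s t y ν : m → R} :
    (y = s + C *ᵥ ν ∧ ν = t - J *ᵥ y) ↔
      (y = (1 + C * J)⁻¹ *ᵥ (s + C *ᵥ t) ∧ ν = (1 + J * C)⁻¹ *ᵥ (t - J *ᵥ s)) := by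
  have solution : ∀ y ν, y = s + C *ᵥ ν → ν = t - J *ᵥ y →
      y = (1 + C * J)⁻¹ *ᵥ (s + C *ᵥ t) ∧ ν = (1 + J * C)⁻¹ *ᵥ (t - J *ᵥ s) := by
    intro y ν hy hν
    rw [eq_inv_mulVec_iff hP, eq_inv_mulVec_iff (isUnit_one_add_mul_comm hP)]
    have hCν := congrArg (C *ᵥ ·) hν
    have hJy := congrArg (J *ᵥ ·) hy
    simp only [mulVec_add, mulVec_sub] at hCν hJy
    simp only [add_mulVec, one_mulVec, ← mulVec_mulVec]
    constructor
    · linear_combination (norm := module) hy + hCν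
    · linear_combination (norm := module) hν - hJy
  refine ⟨fun h ↦ solution y ν h.1 h.2, ?_⟩
  rintro ⟨rfl, rfl⟩
  set y₀ := (1 + C * J)⁻¹ *ᵥ (s + C *ᵥ t)
  have hy₀ : y₀ = s + C *ᵥ (t - J *ᵥ y₀) := by
    have hPy₀ : (1 + C * J) *ᵥ y₀ = s + C *ᵥ t := (eq_inv_mulVec_iff hP).1 rfl
    simp only [add_mulVec, one_mulVec, ← mulVec_mulVec] at hPy₀
    rw [mulVec_sub]
    linear_combination (norm := module) hPy₀
  rw [← (solution y₀ _ hy₀ rfl).2]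
  exact ⟨hy₀, rfl⟩

end Matrix

namespace Matrix.PosSemidef

open scoped ComplexOrder

variable {m 𝕜 : Type*} [Fintype m] [DecidableEq m] [RCLike 𝕜] {C J : Matrix m m 𝕜}

theorem isUnit_one_add_mul (hC : C.PosSemidef) (hJ : J.PosSemidef) : IsUnit (1 + C * J) := by
  rw [isUnit_iff_isUnit_det, isUnit_iff_ne_zero]
  intro hdet
  obtain ⟨v, hv, hv0⟩ := exists_mulVec_eq_zero_iff.mpr hdet
  rw [add_mulVec, one_mulVec, ← mulVec_mulVec, add_eq_zero_iff_eq_neg] at hv0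
  have hJv : star v ⬝ᵥ J *ᵥ v = -(star (J *ᵥ v) ⬝ᵥ C *ᵥ (J *ᵥ v)) := by
    nth_rw 1 [hv0]
    rw [star_neg, neg_dotProduct, star_mulVec, ← dotProduct_mulVec, hC.isHermitian.eq]
  have hzero : star v ⬝ᵥ J *ᵥ v = 0 :=
    le_antisymm (hJv ▸ neg_nonpos.2 (hC.dotProduct_mulVec_nonneg _)) (hJ.dotProduct_mulVec_nonneg v)
  rw [hJ.dotProduct_mulVec_zero_iff] at hzero
  exact hv (by rw [hv0, hzero, mulVec_zero, neg_zero])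

theorem inv_one_add_mul_mul (hC : C.PosSemidef) (hJ : J.PosSemidef) :
    ((1 + C * J)⁻¹ * C).PosSemidef := by
  have hdet := (isUnit_iff_isUnit_det _).1 (isUnit_one_add_mul hJ hC)
  have hinv : (1 + C * J)⁻¹ᴴ = (1 + J * C)⁻¹ := by
    rw [conjTranspose_nonsing_inv, conjTranspose_add, conjTranspose_one, conjTranspose_mul,
      hC.isHermitian.eq, hJ.isHermitian.eq]
  have key : (1 + C * J)⁻¹ * C = (1 + C * J)⁻¹ * (C + C * J * Cᴴ) * (1 + C * J)⁻¹ᴴ := by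
    rw [hinv, hC.isHermitian.eq, show C + C * J * C = C * (1 + J * C) by noncomm_ring,
      Matrix.mul_assoc, Matrix.mul_assoc, mul_nonsing_inv _ hdet, Matrix.mul_one]
  rw [key]
  exact (hC.add (hJ.mul_mul_conjTranspose_same C)).mul_mul_conjTranspose_same _

end Matrix.PosSemidef

namespace FilteringElem

variable {n : ℕ} {a b : FilteringElem n}

theorem posSemidef_filterOp_C (haC : a.C.PosSemidef) (hbJ : b.J.PosSemidef)
    (hbC : b.C.PosSemidef) : (filterOp a b).C.PosSemidef := by
  have h := (haC.inv_one_add_mul_mul hbJ).mul_mul_conjTranspose_same b.A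
  rw [conjTranspose_eq_transpose_of_trivial, ← Matrix.mul_assoc] at h
  exact h.add hbC

theorem posSemidef_filterOp_J (haJ : a.J.PosSemidef) (haC : a.C.PosSemidef)
    (hbJ : b.J.PosSemidef) : (filterOp a b).J.PosSemidef := by
  have h := (hbJ.inv_one_add_mul_mul haC).mul_mul_conjTranspose_same a.Aᵀ
  rw [conjTranspose_eq_transpose_of_trivial, transpose_transpose, ← Matrix.mul_assoc] at h
  exact h.add haJ

def Relates (a : FilteringElem n) (x μ x' μ' : Fin n → ℝ) : Prop :=
  x' = a.A *ᵥ x + a.b + a.C *ᵥ μ' ∧ μ = a.Aᵀ *ᵥ μ' + a.η - a.J *ᵥ x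

theorem relates_injective : Function.Injective (Relates (n := n)) := by
  intro a a' h
  have coeffs : ∀ x μ', a.A *ᵥ x + a.b + a.C *ᵥ μ' = a'.A *ᵥ x + a'.b + a'.C *ᵥ μ' ∧
      a.Aᵀ *ᵥ μ' + a.η + (-a.J) *ᵥ x = a'.Aᵀ *ᵥ μ' + a'.η + (-a'.J) *ᵥ x := by
    intro x μ'
    have : a'.Relates x (a.Aᵀ *ᵥ μ' + a.η - a.J *ᵥ x) (a.A *ᵥ x + a.b + a.C *ᵥ μ') μ' :=
      h ▸ ⟨rfl, rfl⟩
    simpa only [Relates, neg_mulVec, ← sub_eq_add_neg] using this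
  obtain ⟨hA, hb, hC⟩ := mulVec_add_add_mulVec_inj fun x μ' ↦ (coeffs x μ').1
  obtain ⟨-, hη, hJ⟩ := mulVec_add_add_mulVec_inj fun μ' x ↦ (coeffs x μ').2
  cases a; cases a'
  simp_all

theorem relates_filterOp_iff (hP : IsUnit (1 + a.C * b.J)) (haC : a.C.IsSymm)
    (hbJ : b.J.IsSymm) {x μ x'' μ'' : Fin n → ℝ} :
    (filterOp a b).Relates x μ x'' μ'' ↔
      ∃ x' μ', a.Relates x μ x' μ' ∧ b.Relates x' μ' x'' μ'' := by
  set s := a.A *ᵥ x + a.b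
  set t := b.Aᵀ *ᵥ μ'' + b.η
  have hx : (filterOp a b).A *ᵥ x + (filterOp a b).b + (filterOp a b).C *ᵥ μ'' =
      b.A *ᵥ ((1 + a.C * b.J)⁻¹ *ᵥ (s + a.C *ᵥ t)) + b.b + b.C *ᵥ μ'' := by
    simp only [filterOp, s, t, mulVec_add, add_mulVec, mulVec_mulVec, Matrix.mul_assoc]
    abel
  have hμ : (filterOp a b).Aᵀ *ᵥ μ'' + (filterOp a b).η - (filterOp a b).J *ᵥ x =
      a.Aᵀ *ᵥ ((1 + b.J * a.C)⁻¹ *ᵥ (t - b.J *ᵥ s)) + a.η - a.J *ᵥ x := by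
    simp only [filterOp, s, t, transpose_mul, transpose_inv_one_add_mul haC hbJ, mulVec_add,
      mulVec_sub, add_mulVec, mulVec_mulVec, Matrix.mul_assoc]
    abel
  calc (filterOp a b).Relates x μ x'' μ''
      ↔ ∃ x' μ', (x' = s + a.C *ᵥ μ' ∧ μ' = t - b.J *ᵥ x') ∧
          x'' = b.A *ᵥ x' + b.b + b.C *ᵥ μ'' ∧ μ = a.Aᵀ *ᵥ μ' + a.η - a.J *ᵥ x := by
        simp only [Relates, hx, hμ, eq_add_mulVec_and_eq_sub_mulVec_iff hP, and_assoc,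
          exists_and_left, exists_eq_left]
    _ ↔ _ := by
        simp only [Relates]
        tauto

end FilteringElem

open FilteringElem

theorem filterOp_assoc_general (n : ℕ) (a₁ a₂ a₃ : FilteringElem n)
    (hC₁ : a₁.C.PosSemidef) (hC₂ : a₂.C.PosSemidef) (hJ₂ : a₂.J.PosSemidef)
    (hJ₃ : a₃.J.PosSemidef) :
    IsUnit (1 + a₁.C * a₂.J) ∧
    IsUnit (1 + a₂.C * a₃.J) ∧
    IsUnit (1 + (filterOp a₁ a₂).C * a₃.J) ∧
    IsUnit (1 + a₁.C * (filterOp a₂ a₃).J) ∧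
    filterOp (filterOp a₁ a₂) a₃ = filterOp a₁ (filterOp a₂ a₃) := by
  have isSymm {M : Matrix (Fin n) (Fin n) ℝ} (h : M.PosSemidef) : M.IsSymm :=
    isHermitian_iff_isSymm.1 h.isHermitian
  have hC₁₂ := posSemidef_filterOp_C hC₁ hJ₂ hC₂
  have hJ₂₃ := posSemidef_filterOp_J hJ₂ hC₂ hJ₃
  have h₁₂ := hC₁.isUnit_one_add_mul hJ₂
  have h₂₃ := hC₂.isUnit_one_add_mul hJ₃
  have h₁₂_₃ := hC₁₂.isUnit_one_add_mul hJ₃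
  have h₁_₂₃ := hC₁.isUnit_one_add_mul hJ₂₃
  refine ⟨h₁₂, h₂₃, h₁₂_₃, h₁_₂₃, relates_injective ?_⟩
  ext x μ x' μ'
  simp only [relates_filterOp_iff h₁₂_₃ (isSymm hC₁₂) (isSymm hJ₃),
    relates_filterOp_iff h₁_₂₃ (isSymm hC₁) (isSymm hJ₂₃),
    relates_filterOp_iff h₁₂ (isSymm hC₁) (isSymm hJ₂),
    relates_filterOp_iff h₂₃ (isSymm hC₂) (isSymm hJ₃)]
  constructor
  · rintro ⟨y, ν, ⟨z, ζ, h₁, h₂⟩, h₃⟩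
    exact ⟨z, ζ, h₁, y, ν, h₂, h₃⟩
  · rintro ⟨z, ζ, h₁, y, ν, h₂, h₃⟩
    exact ⟨y, ν, ⟨z, ζ, h₁, h₂⟩, h₃⟩

/-- For filtering elements whose `C`- and `J`-components are symmetric positive
semidefinite, all the matrix inverses needed for `(a₁ ⊗ a₂) ⊗ a₃` and `a₁ ⊗ (a₂ ⊗ a₃)`
exist, and the two products are equal: the filtering operator is associative. -/
theorem filterOp_assoc (n : ℕ) (a₁ a₂ a₃ : FilteringElem n)
    (hC₁ : a₁.C.PosSemidef) (hJ₁ : a₁.J.PosSemidef)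
    (hC₂ : a₂.C.PosSemidef) (hJ₂ : a₂.J.PosSemidef)
    (hC₃ : a₃.C.PosSemidef) (hJ₃ : a₃.J.PosSemidef) :
    IsUnit (1 + a₁.C * a₂.J) ∧
    IsUnit (1 + a₂.C * a₃.J) ∧
    IsUnit (1 + (filterOp a₁ a₂).C * a₃.J) ∧
    IsUnit (1 + a₁.C * (filterOp a₂ a₃).J) ∧
    filterOp (filterOp a₁ a₂) a₃ = filterOp a₁ (filterOp a₂ a₃) :=
  filterOp_assoc_general n a₁ a₂ a₃ hC₁ hC₂ hJ₂ hJ₃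
end

section
/- Correctness of the in-place Ladner–Fischer parallel scan: let (M, ⊗) be a semigroup, n ∈ ℕ, T = 2ⁿ, and a : {1, …, T} → M (1-indexed). First perform the up-sweep: u_0 = a and, for d = 0, …, n−1, u_{d+1}(k) = u_d(k − 2^d) ⊗ u_d(k) if 2^{d+1} divides k, else u_{d+1}(k) = u_d(k). Then perform the down-sweep: starting from v_n = u_n, for d = n−1 down to 0, set v_d(i + 2^d) = v_{d+1}(i) ⊗ v_{d+1}(i + 2^d) for every positive multiple i of 2^{d+1} with i + 2^d ≤ T, leaving all other positions unchanged. Then v_0(k) = a(1) ⊗ a(2) ⊗ ⋯ ⊗ a(k) for every k with 1 ≤ k ≤ T. -/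
/-- `seqProd a s j = a s * a (s+1) * ⋯ * a (s+j)` in a semigroup. -/
def seqProd {M : Type*} [Semigroup M] (a : ℕ → M) (s : ℕ) : ℕ → M
  | 0 => a s
  | j + 1 => seqProd a s j * a (s + j + 1)

/-- One level of the up-sweep: position `k` becomes `u (k - 2^d) * u k` if `2^(d+1)`
divides `k`, and is left unchanged otherwise. -/
def upStep {M : Type*} [Semigroup M] (d : ℕ) (u : ℕ → M) : ℕ → M :=
  fun k => if 2 ^ (d + 1) ∣ k then u (k - 2 ^ d) * u k else u k

/-- `upIter a d`: the (1-indexed) array after `d` levels of the up-sweep. -/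
def upIter {M : Type*} [Semigroup M] (a : ℕ → M) : ℕ → ℕ → M
  | 0 => a
  | d + 1 => upStep d (upIter a d)

/-- One level of the Ladner–Fischer down-sweep: set
`v'(i + 2^d) = v i * v (i + 2^d)` for every positive multiple `i` of `2^(d+1)` with
`i + 2^d ≤ T`, leaving all other positions unchanged.  As a function of position `p`
(with `i = p - 2^d`): if `2^d < p ≤ T` and `2^(d+1)` divides `p - 2^d` then
`v'(p) = v (p - 2^d) * v p` else `v'(p) = v p`. -/
def lfStep {M : Type*} [Semigroup M] (T d : ℕ) (v : ℕ → M) : ℕ → M :=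
  fun p =>
    if 2 ^ d < p ∧ p ≤ T ∧ 2 ^ (d + 1) ∣ (p - 2 ^ d) then v (p - 2 ^ d) * v p else v p

/-- The Ladner–Fischer down-sweep, running levels `d = n-1` down to `0`
starting from `v`. -/
def lfDown {M : Type*} [Semigroup M] (T n : ℕ) (v : ℕ → M) : ℕ → ℕ → M
  | 0 => v
  | j + 1 => lfStep T (n - j - 1) (lfDown T n v j)

/-- The final array `v_0` of the in-place Ladner–Fischer scan on the 1-indexed input
`a` of length `T = 2^n`: up-sweep followed by the full down-sweep. -/
def lfFinal {M : Type*} [Semigroup M] (n : ℕ) (a : ℕ → M) : ℕ → M :=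
  lfDown (2 ^ n) n (upIter a n) n

theorem seqProd_append {M : Type*} [Semigroup M] (a : ℕ → M) (s j : ℕ) :
    ∀ l, seqProd a s j * seqProd a (s + j + 1) l = seqProd a s (j + l + 1)
  | 0 => rfl
  | l + 1 => by
    show seqProd a s j * (seqProd a (s + j + 1) l * a (s + j + 1 + l + 1)) = _
    rw [← mul_assoc, seqProd_append a s j l]
    show _ = seqProd a s (j + l + 1) * a (s + (j + l + 1) + 1)
    congr 2
    omega

theorem upIter_dvd {M : Type*} [Semigroup M] (a : ℕ → M) :
    ∀ d k, 1 ≤ k → 2 ^ d ∣ k → upIter a d k = seqProd a (k + 1 - 2 ^ d) (2 ^ d - 1)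
  | 0, k, hk, _ => by
    show a k = seqProd a (k + 1 - 2 ^ 0) (2 ^ 0 - 1)
    norm_num [seqProd]
  | d + 1, k, hk, hdvd => by
    have h1 : (1:ℕ) ≤ 2 ^ d := Nat.one_le_two_pow
    have hp : (2:ℕ) ^ (d + 1) = 2 * 2 ^ d := by ring
    have h2 : 2 ^ (d + 1) ≤ k := Nat.le_of_dvd (by omega) hdvd
    have hd1 : 2 ^ d ∣ k := dvd_trans (pow_dvd_pow 2 (Nat.le_succ d)) hdvd
    have hd2 : 2 ^ d ∣ k - 2 ^ d := Nat.dvd_sub hd1 dvd_rfl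
    have hk2 : 1 ≤ k - 2 ^ d := by omega
    show upStep d (upIter a d) k = _
    rw [upStep, if_pos hdvd, upIter_dvd a d _ hk2 hd2, upIter_dvd a d k hk hd1]
    rw [show k - 2 ^ d + 1 - 2 ^ d = k + 1 - 2 ^ (d + 1) from by omega,
        show k + 1 - 2 ^ d = (k + 1 - 2 ^ (d + 1)) + (2 ^ d - 1) + 1 from by omega,
        seqProd_append]
    congr 1
    omega

theorem upIter_stable {M : Type*} [Semigroup M] (a : ℕ → M) (d k : ℕ)
    (h : ¬ 2 ^ d ∣ k) : ∀ m, upIter a (d + m) k = upIter a d k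
  | 0 => rfl
  | m + 1 => by
    show upStep (d + m) (upIter a (d + m)) k = _
    rw [upStep, if_neg, upIter_stable a d k h m]
    intro hdvd
    exact h (dvd_trans (pow_dvd_pow 2 (by omega)) hdvd)

theorem upIter_exact {M : Type*} [Semigroup M] (a : ℕ → M) (n d k : ℕ)
    (hk : 1 ≤ k) (h1 : 2 ^ d ∣ k) (h2 : ¬ 2 ^ (d + 1) ∣ k) (hdn : d + 1 ≤ n) :
    upIter a n k = seqProd a (k + 1 - 2 ^ d) (2 ^ d - 1) := by
  obtain ⟨m, rfl⟩ := Nat.exists_eq_add_of_le hdn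
  rw [upIter_stable a (d + 1) k h2 m]
  show upStep d (upIter a d) k = _
  rw [upStep, if_neg h2]
  exact upIter_dvd a d k hk h1

theorem lfDown_inv {M : Type*} [Semigroup M] (n : ℕ) (a : ℕ → M) :
    ∀ j, j ≤ n → ∀ k, 1 ≤ k → k ≤ 2 ^ n →
      (2 ^ (n - j) ∣ k → lfDown (2 ^ n) n (upIter a n) j k = seqProd a 1 (k - 1)) ∧
      (¬ 2 ^ (n - j) ∣ k → lfDown (2 ^ n) n (upIter a n) j k = upIter a n k)
  | 0, hj, k, hk1, hk2 => by
    constructor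
    · intro hdvd
      have h2 : 2 ^ n ≤ k := Nat.le_of_dvd (by omega) hdvd
      have hk : k = 2 ^ n := le_antisymm hk2 h2
      show upIter a n k = _
      rw [upIter_dvd a n k hk1 hdvd]
      congr 1 <;> omega
    · intro _; rfl
  | j + 1, hj, k, hk1, hk2 => by
    have ih := lfDown_inv n a j (by omega)
    have hd : n - j = (n - (j + 1)) + 1 := by omega
    set d := n - (j + 1) with hd'
    have h1 : (1:ℕ) ≤ 2 ^ d := Nat.one_le_two_pow
    have hp : (2:ℕ) ^ (d + 1) = 2 * 2 ^ d := by ring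
    have hdj : n - j - 1 = d := by omega
    show (2 ^ d ∣ k → lfStep (2 ^ n) (n - j - 1) (lfDown (2 ^ n) n (upIter a n) j) k
            = seqProd a 1 (k - 1)) ∧
        (¬ 2 ^ d ∣ k → lfStep (2 ^ n) (n - j - 1) (lfDown (2 ^ n) n (upIter a n) j) k
            = upIter a n k)
    rw [hdj]
    simp only [lfStep]
    constructor
    · intro hk
      by_cases hyes : 2 ^ (d + 1) ∣ k
      · rw [if_neg]
        · exact (ih k hk1 hk2).1 (by rw [hd]; exact hyes)
        · rintro ⟨hlt, -, hdvd⟩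
          have h3 : 2 ^ (d + 1) ∣ k - (k - 2 ^ d) := Nat.dvd_sub hyes hdvd
          have h4 : k - (k - 2 ^ d) = 2 ^ d := by omega
          rw [h4] at h3
          have := Nat.le_of_dvd (by omega) h3
          omega
      · obtain ⟨m, hm⟩ := hk
        have hmodd : ¬ 2 ∣ m := by
          rintro ⟨t, rfl⟩
          exact hyes ⟨t, by rw [hm]; ring⟩
        obtain ⟨t, rfl⟩ : ∃ t, m = 2 * t + 1 := ⟨m / 2, by omega⟩
        rcases Nat.eq_zero_or_pos t with rfl | ht
        · -- k = 2^d : untouched, equals its own prefix from the up-sweep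
          have hk0 : k = 2 ^ d := by omega
          rw [if_neg (by omega)]
          have h5 := (ih k hk1 hk2).2 (by rw [hd]; exact hyes)
          rw [h5, upIter_exact a n d k hk1 ⟨2 * 0 + 1, by omega⟩ hyes (by omega)]
          congr 1 <;> omega
        · set i := 2 ^ (d + 1) * t with hi'
          have hik : k = i + 2 ^ d := by
            rw [hm, hi', hp]; ring
          have hit : 2 ^ (d + 1) ≤ i := Nat.le_mul_of_pos_right _ ht
          have hidvd : 2 ^ (d + 1) ∣ i := Dvd.intro t rfl
          rw [if_pos ⟨by omega, hk2, by rw [show k - 2 ^ d = i from by omega]; exact hidvd⟩]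
          rw [show k - 2 ^ d = i from by omega]
          have hpre := (ih i (by omega) (by omega)).1 (by rw [hd]; exact hidvd)
          have hup := (ih k hk1 hk2).2 (by rw [hd]; exact hyes)
          rw [hpre, hup, upIter_exact a n d k hk1 ⟨2 * t + 1, hm⟩ hyes (by omega)]
          rw [show k + 1 - 2 ^ d = 1 + (i - 1) + 1 from by omega, seqProd_append]
          congr 1
          omega
    · intro hk
      rw [if_neg]
      · exact (ih k hk1 hk2).2 (by
          rw [hd]
          intro h
          exact hk (dvd_trans (pow_dvd_pow 2 (Nat.le_succ d)) h))
      · rintro ⟨hlt, -, hdvd⟩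
        have h3 : 2 ^ d ∣ k - 2 ^ d := dvd_trans (pow_dvd_pow 2 (Nat.le_succ d)) hdvd
        obtain ⟨c, hc⟩ := h3
        exact hk ⟨c + 1, by rw [Nat.mul_succ]; omega⟩

/-- Correctness of the in-place Ladner–Fischer parallel scan: on a 1-indexed input of
length `T = 2^n` over a semigroup, the final array holds the inclusive all-prefix-sums
`v_0(k) = a 1 * a 2 * ⋯ * a k` for all `1 ≤ k ≤ T`. -/
theorem ladnerFischer_correct {M : Type*} [Semigroup M] (n : ℕ) (a : ℕ → M) :
    ∀ k, 1 ≤ k → k ≤ 2 ^ n → lfFinal n a k = seqProd a 1 (k - 1) := by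
  intro k hk1 hk2
  have h := (lfDown_inv n a n le_rfl k hk1 hk2).1
  simp only [Nat.sub_self, pow_zero] at h
  exact h (one_dvd k)
end
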